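/- arXiv:2401.06425 — 2 statements merged into one kernel-verified Lean document; each statement's English description precedes it below -/
import Mathlib

section
/- Let f : [0,1]^d → ℝ be bounded and Borel measurable. Then for every integer k ≥ 0 and every x ∈ [0,1]^d, |S^{(d)}_{2^k}(f,x) − f(x)| ≤ Σ_{l=0}^{d−1} ω(f, (2l+1)·2^{−k}). -/
open MeasureTheory

/-- One-dimensional Haar function of level `j` and index `i` (for `1 ≤ i ≤ 2^j`),
with the averaging convention at dyadic points and one-sided limits at `0` and `1`. -/
noncomputable def haarAux (j i : ℕ) (x : ℝ) : ℝ :=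
  let a : ℝ := ((i : ℝ) - 1) / 2 ^ j
  let m : ℝ := (2 * (i : ℝ) - 1) / 2 ^ (j + 1)
  let b : ℝ := (i : ℝ) / 2 ^ j
  if x < a ∨ b < x then 0
  else if x = a then (if a = 0 then (2 : ℝ) ^ ((j : ℝ) / 2) else (2 : ℝ) ^ ((j : ℝ) / 2) / 2)
  else if x = b then (if b = 1 then -(2 : ℝ) ^ ((j : ℝ) / 2) else -((2 : ℝ) ^ ((j : ℝ) / 2)) / 2)
  else if x = m then 0
  else if x < m then (2 : ℝ) ^ ((j : ℝ) / 2)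
  else -(2 : ℝ) ^ ((j : ℝ) / 2)

/-- The level `j(n)` of the Haar function `χ_n`: for `n ≥ 2` the unique `j` with
`2^j + 1 ≤ n ≤ 2^(j+1)`; `j(1) = 0`. -/
def haarJ (n : ℕ) : ℕ := Nat.log 2 (n - 1)

/-- The index `i(n)` in the level of `χ_n`: `n = 2^(j n) + i n` for `n ≥ 2`. -/
def haarI (n : ℕ) : ℕ := n - 2 ^ haarJ n

/-- The `n`-th Haar function on `[0,1]` (`χ_1 ≡ 1`). -/
noncomputable def haarFn (n : ℕ) (x : ℝ) : ℝ :=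
  if n ≤ 1 then 1 else haarAux (haarJ n) (haarI n) x

/-- Fourier–Haar coefficient `c_n(g) = ∫_0^1 g χ_n`. -/
noncomputable def haarCoeff (g : ℝ → ℝ) (n : ℕ) : ℝ :=
  ∫ t in Set.Icc (0:ℝ) 1, g t * haarFn n t

/-- Fourier–Haar partial sum `S_N(g,x) = ∑_{n=1}^N c_n(g) χ_n(x)`. -/
noncomputable def haarSum (N : ℕ) (g : ℝ → ℝ) (x : ℝ) : ℝ :=
  ∑ n ∈ Finset.Icc 1 N, haarCoeff g n * haarFn n x

/-- The unit cube `[0,1]^d`. -/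
def unitCube (d : ℕ) : Set (Fin d → ℝ) := Set.Icc 0 1

/-- Multivariate Fourier–Haar coefficient `c^{(d)}_{n_1,…,n_d}(f)`. -/
noncomputable def haarCoeffD (d : ℕ) (f : (Fin d → ℝ) → ℝ) (n : Fin d → ℕ) : ℝ :=
  ∫ x in unitCube d, f x * ∏ s, haarFn (n s) (x s)

/-- Multivariate Fourier–Haar sum `S^{(d)}_{2^k}(f,x)` over `ℕ_k = {1,…,2^k}^d`. -/
noncomputable def haarSumD (d k : ℕ) (f : (Fin d → ℝ) → ℝ) (x : Fin d → ℝ) : ℝ :=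
  ∑ n ∈ Fintype.piFinset (fun _ : Fin d => Finset.Icc 1 (2 ^ k)),
    haarCoeffD d f n * ∏ s, haarFn (n s) (x s)

/-- Uniform modulus of continuity on `[0,1]^d` (Euclidean norm of the shift). -/
noncomputable def modC (d : ℕ) (u : (Fin d → ℝ) → ℝ) (r : ℝ) : ℝ :=
  sSup {v : ℝ | ∃ x h : Fin d → ℝ, (∀ s, x s ∈ Set.Icc (0:ℝ) 1) ∧
    (∀ s, x s + h s ∈ Set.Icc (0:ℝ) 1) ∧ Real.sqrt (∑ s, (h s) ^ 2) ≤ r ∧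
    v = |u (fun s => x s + h s) - u x|}

/-- Uniform modulus of continuity on `[0,1]`. -/
noncomputable def mod1 (g : ℝ → ℝ) (r : ℝ) : ℝ :=
  sSup {v : ℝ | ∃ x h : ℝ, x ∈ Set.Icc (0:ℝ) 1 ∧ x + h ∈ Set.Icc (0:ℝ) 1 ∧ |h| ≤ r ∧
    v = |g (x + h) - g x|}

/-- The operator `P_{k,j}`: one-dimensional Fourier–Haar sum of order `2^k`
applied in the `j`-th coordinate. -/
noncomputable def haarProj (d k : ℕ) (j : Fin d) (u : (Fin d → ℝ) → ℝ) (x : Fin d → ℝ) : ℝ :=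
  haarSum (2 ^ k) (fun t => u (Function.update x j t)) (x j)

namespace HW

variable {j i : ℕ} {x : ℝ}

lemma two_pow_pos (j : ℕ) : (0:ℝ) < 2 ^ j := by positivity

lemma amb (j i : ℕ) :
    ((i:ℝ) - 1) / 2 ^ j < (2 * (i : ℝ) - 1) / 2 ^ (j + 1) ∧
    (2 * (i : ℝ) - 1) / 2 ^ (j + 1) < (i:ℝ) / 2 ^ j := by
  constructor <;> rw [div_lt_div_iff₀ (by positivity) (by positivity)] <;> ring_nf <;> nlinarith [two_pow_pos j]

lemma haarAux_of_lt_left (h : x < ((i:ℝ) - 1) / 2 ^ j) : haarAux j i x = 0 := by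
  simp only [haarAux]
  rw [if_pos (Or.inl h)]

lemma haarAux_of_gt_right (h : (i:ℝ) / 2 ^ j < x) : haarAux j i x = 0 := by
  simp only [haarAux]
  rw [if_pos (Or.inr h)]

lemma haarAux_left (h : x = ((i:ℝ) - 1) / 2 ^ j) :
    haarAux j i x = if ((i:ℝ) - 1) / 2 ^ j = 0 then (2 : ℝ) ^ ((j : ℝ) / 2) else (2 : ℝ) ^ ((j : ℝ) / 2) / 2 := by
  have h1 : ((i:ℝ) - 1) / 2 ^ j < (i:ℝ) / 2 ^ j := by
    rw [div_lt_div_iff₀ (by positivity) (by positivity)]; nlinarith [two_pow_pos j]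
  simp only [haarAux]
  rw [if_neg (by push_neg; constructor <;> [exact le_of_eq h.symm; linarith [h1]]), if_pos h]

lemma haarAux_right (h : x = (i:ℝ) / 2 ^ j) :
    haarAux j i x = if (i:ℝ) / 2 ^ j = 1 then -(2 : ℝ) ^ ((j : ℝ) / 2) else -((2 : ℝ) ^ ((j : ℝ) / 2)) / 2 := by
  have h1 : ((i:ℝ) - 1) / 2 ^ j < (i:ℝ) / 2 ^ j := by
    rw [div_lt_div_iff₀ (by positivity) (by positivity)]; nlinarith [two_pow_pos j]
  simp only [haarAux]
  rw [if_neg (by push_neg; constructor <;> [linarith [h1, h.ge]; exact h.le]),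
      if_neg (by rw [h]; exact ne_of_gt h1), if_pos h]

lemma haarAux_mid (h : x = (2 * (i : ℝ) - 1) / 2 ^ (j + 1)) : haarAux j i x = 0 := by
  obtain ⟨h1, h2⟩ := amb j i
  simp only [haarAux]
  rw [if_neg (by push_neg; constructor <;> linarith [h.le, h.ge]),
      if_neg (by rw [h]; exact ne_of_gt h1), if_neg (by rw [h]; exact ne_of_lt h2), if_pos h]

lemma haarAux_of_mem_left (h1 : ((i:ℝ) - 1) / 2 ^ j < x) (h2 : x < (2 * (i : ℝ) - 1) / 2 ^ (j + 1)) :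
    haarAux j i x = (2 : ℝ) ^ ((j : ℝ) / 2) := by
  obtain ⟨hA, hB⟩ := amb j i
  simp only [haarAux]
  rw [if_neg (by push_neg; constructor <;> linarith), if_neg (by linarith),
      if_neg (by intro h; rw [h] at h2; linarith), if_neg (ne_of_lt h2), if_pos h2]

lemma haarAux_of_mem_right (h1 : (2 * (i : ℝ) - 1) / 2 ^ (j + 1) < x) (h2 : x < (i:ℝ) / 2 ^ j) :
    haarAux j i x = -(2 : ℝ) ^ ((j : ℝ) / 2) := by
  obtain ⟨hA, hB⟩ := amb j i
  simp only [haarAux]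
  rw [if_neg (by push_neg; constructor <;> linarith), if_neg (by intro h; rw [h] at h1; linarith),
      if_neg (ne_of_lt h2), if_neg (ne_of_gt h1), if_neg (not_lt.2 h1.le)]

lemma haarAux_abs_le : |haarAux j i x| ≤ (2 : ℝ) ^ ((j : ℝ) / 2) := by
  have hp : (0:ℝ) < (2 : ℝ) ^ ((j : ℝ) / 2) := Real.rpow_pos_of_pos (by norm_num) _
  simp only [haarAux]
  split_ifs <;> rw [abs_le] <;> constructor <;> nlinarith [hp]

lemma measurable_haarAux (j i : ℕ) : Measurable (haarAux j i) := by
  unfold haarAux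
  refine Measurable.ite ?_ measurable_const (Measurable.ite (measurableSet_eq) measurable_const
    (Measurable.ite (measurableSet_eq) measurable_const (Measurable.ite (measurableSet_eq)
      measurable_const (Measurable.ite ?_ measurable_const measurable_const))))
  · exact (measurableSet_lt measurable_id measurable_const).union
      (measurableSet_lt measurable_const measurable_id)
  · exact measurableSet_lt measurable_id measurable_const

lemma sq_rpow (j : ℕ) : (2 : ℝ) ^ ((j : ℝ) / 2) * (2 : ℝ) ^ ((j : ℝ) / 2) = 2 ^ j := by
  rw [← Real.rpow_add (by norm_num), ← Real.rpow_natCast 2 j]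
  norm_num

end HW




namespace HW

lemma haarJ_eq {k i : ℕ} (h1 : 1 ≤ i) (h2 : i ≤ 2 ^ k) : Nat.log 2 (2 ^ k + i - 1) = k := by
  apply Nat.log_eq_of_pow_le_of_lt_pow <;> omega

lemma haarFn_eq {k i : ℕ} (h1 : 1 ≤ i) (h2 : i ≤ 2 ^ k) :
    haarFn (2 ^ k + i) = haarAux k i := by
  have hk : 2 ^ k ≥ 1 := Nat.one_le_two_pow
  have : ¬ (2 ^ k + i ≤ 1) := by omega
  funext x
  simp only [haarFn, haarJ, haarI, this, if_false, haarJ_eq h1 h2]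
  congr 1
  omega

lemma measurable_haarFn (n : ℕ) : Measurable (haarFn n) := by
  unfold haarFn
  split_ifs
  · exact measurable_const
  · exact measurable_haarAux _ _

lemma haarFn_abs_le (n : ℕ) : ∃ C : ℝ, ∀ x, |haarFn n x| ≤ C := by
  unfold haarFn
  split_ifs
  · exact ⟨1, fun x => by norm_num⟩
  · exact ⟨_, fun x => haarAux_abs_le⟩

/-- a.e. version of haarAux as difference of indicators -/
lemma haarAux_ae_eq (j i : ℕ) :
    ∀ x : ℝ, x ∉ ({((i:ℝ)-1)/2^j, (2*(i:ℝ)-1)/2^(j+1), (i:ℝ)/2^j} : Set ℝ) →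
      haarAux j i x = (2 : ℝ) ^ ((j : ℝ) / 2) *
        ((Set.Ioo (((i:ℝ)-1)/2^j) ((2*(i:ℝ)-1)/2^(j+1))).indicator 1 x
          - (Set.Ioo ((2*(i:ℝ)-1)/2^(j+1)) ((i:ℝ)/2^j)).indicator 1 x) := by
  intro x hx
  simp only [Set.mem_insert_iff, Set.mem_singleton_iff, not_or] at hx
  obtain ⟨hxa, hxm, hxb⟩ := hx
  obtain ⟨h1, h2⟩ := amb j i
  rcases lt_trichotomy x (((i:ℝ)-1)/2^j) with h | h | h
  · rw [haarAux_of_lt_left h]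
    rw [Set.indicator_of_notMem (by simp [Set.mem_Ioo]; intro; linarith),
        Set.indicator_of_notMem (by simp [Set.mem_Ioo]; intro; linarith)]
    ring
  · exact absurd h hxa
  rcases lt_trichotomy x ((2*(i:ℝ)-1)/2^(j+1)) with h' | h' | h'
  · rw [haarAux_of_mem_left h h']
    rw [Set.indicator_of_mem (Set.mem_Ioo.2 ⟨h, h'⟩), Set.indicator_of_notMem
        (by simp [Set.mem_Ioo]; intro; linarith)]
    simp
  · exact absurd h' hxm
  rcases lt_trichotomy x ((i:ℝ)/2^j) with h'' | h'' | h''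
  · rw [haarAux_of_mem_right h' h'']
    rw [Set.indicator_of_notMem (by simp [Set.mem_Ioo]; intro; linarith),
        Set.indicator_of_mem (Set.mem_Ioo.2 ⟨h', h''⟩)]
    simp
  · exact absurd h'' hxb
  · rw [haarAux_of_gt_right h'']
    rw [Set.indicator_of_notMem (by simp [Set.mem_Ioo]; intro; linarith),
        Set.indicator_of_notMem (by simp [Set.mem_Ioo]; intro; linarith)]
    ring

lemma integral_haarAux {j i : ℕ} (h1 : 1 ≤ i) (h2 : i ≤ 2 ^ j) :
    ∫ t in Set.Icc (0:ℝ) 1, haarAux j i t = 0 := by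
  have h1' : (1:ℝ) ≤ (i:ℝ) := by exact_mod_cast h1
  have h2' : (i:ℝ) ≤ 2 ^ j := by exact_mod_cast (by exact_mod_cast h2 : (i:ℝ) ≤ ((2^j : ℕ) : ℝ))
  set a : ℝ := ((i:ℝ)-1)/2^j with ha
  set m : ℝ := (2*(i:ℝ)-1)/2^(j+1) with hm
  set b : ℝ := (i:ℝ)/2^j with hb
  obtain ⟨hAm, hMb⟩ := amb j i
  have ha0 : 0 ≤ a := by apply div_nonneg; linarith; positivity
  have hb1 : b ≤ 1 := by rw [hb, div_le_one (by positivity)]; exact h2'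
  have key : ∀ᵐ x ∂(volume.restrict (Set.Icc (0:ℝ) 1)), haarAux j i x
      = (2 : ℝ) ^ ((j : ℝ) / 2) *
        ((Set.Ioo a m).indicator 1 x - (Set.Ioo m b).indicator 1 x) := by
    apply ae_restrict_of_ae
    have hfin : volume ({a, m, b} : Set ℝ) = 0 := by
      exact Set.Finite.measure_zero (((Set.finite_singleton b).insert m).insert a) _
    filter_upwards [measure_eq_zero_iff_ae_notMem.1 hfin] with x hx
    exact haarAux_ae_eq j i x hx
  rw [integral_congr_ae key, integral_const_mul, integral_sub, setIntegral_indicator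
      measurableSet_Ioo, setIntegral_indicator measurableSet_Ioo]
  · have e1 : Set.Icc (0:ℝ) 1 ∩ Set.Ioo a m = Set.Ioo a m :=
      Set.inter_eq_self_of_subset_right (fun x hx => ⟨by linarith [hx.1], by linarith [hx.2]⟩)
    have e2 : Set.Icc (0:ℝ) 1 ∩ Set.Ioo m b = Set.Ioo m b :=
      Set.inter_eq_self_of_subset_right (fun x hx => ⟨by linarith [hx.1], by linarith [hx.2]⟩)
    rw [e1, e2]
    simp only [Pi.one_apply, MeasureTheory.setIntegral_const, smul_eq_mul, mul_one]
    rw [Real.volume_real_Ioo_of_le (by linarith), Real.volume_real_Ioo_of_le (by linarith)]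
    have : m - a = b - m := by rw [ha, hm, hb]; field_simp; ring
    rw [this]; ring
  · exact ((integrableOn_const measure_Ioo_lt_top.ne).integrable_indicator
      measurableSet_Ioo).restrict
  · exact ((integrableOn_const measure_Ioo_lt_top.ne).integrable_indicator
      measurableSet_Ioo).restrict

lemma integral_haarFn {n : ℕ} (h : 2 ≤ n) :
    ∫ t in Set.Icc (0:ℝ) 1, haarFn n t = 0 := by
  set j := Nat.log 2 (n-1) with hj
  have hl : 2 ^ j ≤ n - 1 := Nat.pow_log_le_self 2 (by omega)
  have hu : n - 1 < 2 ^ (j+1) := Nat.lt_pow_succ_log_self (by norm_num) _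
  have hrw : n = 2 ^ j + (n - 2 ^ j) := by omega
  have h1 : 1 ≤ n - 2 ^ j := by omega
  have h2 : n - 2 ^ j ≤ 2 ^ j := by omega
  calc ∫ t in Set.Icc (0:ℝ) 1, haarFn n t
      = ∫ t in Set.Icc (0:ℝ) 1, haarAux j (n - 2^j) t := by
        rw [hrw]; rw [haarFn_eq h1 (by omega)]; rw [← hrw]
    _ = 0 := integral_haarAux h1 h2

end HW


noncomputable def kfun (k : ℕ) (x t : ℝ) : ℝ :=
  ∑ n ∈ Finset.Icc 1 (2^k), haarFn n x * haarFn n t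

namespace HW

lemma Icc_eq_Ioc (N : ℕ) : Finset.Icc 1 N = Finset.Ioc 0 N := by
  ext n; simp; omega

lemma kfun_succ (k : ℕ) (x t : ℝ) (p : ℕ) (hpk : p < 2 ^ k)
    (h1 : (p:ℝ)/2^k < t) (h2 : t < ((p:ℝ)+1)/2^k) :
    kfun (k+1) x t = kfun k x t + haarAux k (p+1) x * haarAux k (p+1) t := by
  unfold kfun
  rw [Icc_eq_Ioc, Icc_eq_Ioc,
    ← Finset.sum_Ioc_consecutive _ (Nat.zero_le (2^k)) (Nat.pow_le_pow_right (by norm_num) k.le_succ)]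
  congr 1
  rw [Finset.sum_eq_single_of_mem (2^k + (p+1)) (by simp [Finset.mem_Ioc]; omega)]
  · rw [haarFn_eq (by omega) (by omega)]
  · intro n hn hne
    simp only [Finset.mem_Ioc] at hn
    set i := n - 2^k with hi
    have hn' : n = 2^k + i := by omega
    have hi1 : 1 ≤ i := by omega
    have hi2 : i ≤ 2^k := by rw [pow_succ] at hn; omega
    have hip : i ≠ p+1 := by omega
    rw [hn', haarFn_eq hi1 hi2]
    rcases lt_or_gt_of_ne hip with hlt | hgt
    · -- i ≤ p : right endpoint i/2^k ≤ p/2^k < t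
      have : (i:ℝ)/2^k < t := by
        apply lt_of_le_of_lt _ h1
        apply div_le_div_of_nonneg_right _ (by positivity)
        exact_mod_cast Nat.lt_succ_iff.1 hlt
      rw [haarAux_of_gt_right this, mul_zero]
    · -- i ≥ p+2 : t < (p+1)/2^k ≤ (i-1)/2^k
      have : t < ((i:ℝ)-1)/2^k := by
        apply lt_of_lt_of_le h2
        apply div_le_div_of_nonneg_right _ (by positivity)
        have : (p:ℕ)+2 ≤ i := hgt
        have := (Nat.cast_le (α := ℝ)).2 this
        push_cast at this ⊢
        linarith
      rw [haarAux_of_lt_left this, mul_zero]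

lemma kfun_char (k : ℕ) : ∀ (x t : ℝ), x ∈ Set.Icc (0:ℝ) 1 → t ∈ Set.Ioo (0:ℝ) 1 →
    ∀ p : ℕ, (p:ℝ)/2^k < t → t < ((p:ℝ)+1)/2^k →
    kfun k x t = if (p:ℝ)/2^k < x ∧ x < ((p:ℝ)+1)/2^k then (2:ℝ)^k
      else if x = (p:ℝ)/2^k then (if p = 0 then (2:ℝ)^k else (2:ℝ)^k/2)
      else if x = ((p:ℝ)+1)/2^k then (if p+1 = 2^k then (2:ℝ)^k else (2:ℝ)^k/2)
      else 0 := by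
  induction k with
  | zero =>
    intro x t hx ht p hp1 hp2
    rw [pow_zero, div_one] at hp1
    have hp0 : p = 0 := by
      by_contra h
      have h1 : (1:ℝ) ≤ (p:ℝ) := by exact_mod_cast Nat.one_le_iff_ne_zero.2 h
      linarith [ht.2]
    subst hp0
    have hL : kfun 0 x t = 1 := by
      simp [kfun, haarFn]
    rw [hL]
    push_cast
    norm_num
    intro ha hb
    rcases eq_or_lt_of_le hx.1 with h0 | h0
    · exact absurd h0.symm hb
    · linarith [ha h0, hx.2]
  | succ k IH =>
    intro x t hx ht p' hp'1 hp'2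
    have h2k : (0:ℝ) < 2^k := by positivity
    have h2k1 : (0:ℝ) < 2^(k+1) := by positivity
    have hps : (2:ℕ)^(k+1) = 2 * 2^k := by rw [pow_succ]; ring
    have hp'lt : p' < 2^(k+1) := by
      by_contra h
      push_neg at h
      have h' : ((2:ℝ)^(k+1)) ≤ (p':ℝ) := by
        have := (Nat.cast_le (α := ℝ)).2 h
        push_cast at this
        linarith
      have : (1:ℝ) ≤ (p':ℝ)/2^(k+1) := by rw [le_div_iff₀ h2k1]; linarith
      linarith [ht.2]
    obtain ⟨p, hparity⟩ : ∃ p : ℕ, p' = 2*p ∨ p' = 2*p + 1 := ⟨p'/2, by omega⟩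
    have hpk : p < 2^k := by omega
    have hAM : (p:ℝ)/2^k < (2*(p:ℝ)+1)/2^(k+1) := by
      rw [div_lt_div_iff₀ h2k h2k1, pow_succ]; ring_nf; nlinarith
    have hMB : (2*(p:ℝ)+1)/2^(k+1) < ((p:ℝ)+1)/2^k := by
      rw [div_lt_div_iff₀ h2k1 h2k, pow_succ]; ring_nf; nlinarith
    have hAB : (p:ℝ)/2^k < ((p:ℝ)+1)/2^k := lt_trans hAM hMB
    have eA : ((↑(p+1) : ℝ) - 1)/2^k = (p:ℝ)/2^k := by push_cast; ring
    have eB : ((↑(p+1) : ℝ))/2^k = ((p:ℝ)+1)/2^k := by push_cast; ring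
    have eM : (2*(↑(p+1):ℝ) - 1)/2^(k+1) = (2*(p:ℝ)+1)/2^(k+1) := by push_cast; ring
    have hs := sq_rpow k
    have hzero : (((p:ℝ))/2^k = 0) ↔ (p = 0) := by
      rw [div_eq_zero_iff]
      constructor
      · rintro (h | h)
        · exact_mod_cast h
        · exact absurd h (by positivity)
      · intro h; left; rw [h]; simp
    have hone : (((p:ℝ)+1)/2^k = 1) ↔ (p + 1 = 2^k) := by
      rw [div_eq_one_iff_eq (ne_of_gt h2k)]
      constructor
      · intro h
        have : ((p:ℝ)+1) = ((2^k : ℕ) : ℝ) := by push_cast; linarith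
        exact_mod_cast this
      · intro h
        have h3 : ((p+1 : ℕ) : ℝ) = ((2^k : ℕ) : ℝ) := by rw [h]
        push_cast at h3
        linarith
    rcases hparity with hpar | hpar
    · -- p' = 2p, t in left half
      subst hpar
      have ea' : ((↑(2*p):ℝ))/2^(k+1) = (p:ℝ)/2^k := by push_cast; rw [pow_succ]; ring_nf
      have eb' : ((↑(2*p):ℝ)+1)/2^(k+1) = (2*(p:ℝ)+1)/2^(k+1) := by push_cast; ring
      rw [ea'] at hp'1
      rw [eb'] at hp'2
      have hp1 : (p:ℝ)/2^k < t := hp'1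
      have hp2 : t < ((p:ℝ)+1)/2^k := lt_trans hp'2 hMB
      have hodd : ¬ (2*p + 1 = 2^(k+1)) := by omega
      have hterm : haarAux k (p+1) t = (2:ℝ)^((k:ℝ)/2) := by
        apply haarAux_of_mem_left
        · rw [eA]; exact hp1
        · rw [eM]; exact hp'2
      rw [kfun_succ k x t p hpk hp1 hp2, IH x t hx ht p hp1 hp2, ea', eb', hterm]
      rcases lt_trichotomy x ((p:ℝ)/2^k) with hA | hA | hA
      · -- x < A
        have d1 : ¬((p:ℝ)/2^k < x ∧ x < ((p:ℝ)+1)/2^k) := by rintro ⟨h, -⟩; linarith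
        have d2 : ¬(x = (p:ℝ)/2^k) := ne_of_lt hA
        have d3 : ¬(x = ((p:ℝ)+1)/2^k) := ne_of_lt (lt_trans hA hAB)
        have g1 : ¬((p:ℝ)/2^k < x ∧ x < (2*(p:ℝ)+1)/2^(k+1)) := by rintro ⟨h, -⟩; linarith
        have g3 : ¬(x = (2*(p:ℝ)+1)/2^(k+1)) := ne_of_lt (lt_trans hA hAM)
        rw [haarAux_of_lt_left (j := k) (i := p+1) (by rw [eA]; exact hA)]
        rw [if_neg d1, if_neg d2, if_neg d3, if_neg g1, if_neg d2, if_neg g3]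
        ring
      · -- x = A
        have d1 : ¬((p:ℝ)/2^k < x ∧ x < ((p:ℝ)+1)/2^k) := by
          rintro ⟨h, -⟩; rw [hA] at h; exact lt_irrefl _ h
        have g1 : ¬((p:ℝ)/2^k < x ∧ x < (2*(p:ℝ)+1)/2^(k+1)) := by
          rintro ⟨h, -⟩; rw [hA] at h; exact lt_irrefl _ h
        rw [haarAux_left (j := k) (i := p+1) (by rw [eA]; exact hA)]
        rw [if_neg d1, if_pos hA, if_neg g1, if_pos hA, eA]
        simp only [hzero]
        by_cases hp0 : p = 0
        · rw [if_pos hp0, if_pos hp0, if_pos (show 2*p = 0 by omega)]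
          linear_combination hs
        · rw [if_neg hp0, if_neg hp0, if_neg (show ¬(2*p = 0) by omega)]
          linear_combination hs/2
      rcases lt_trichotomy x ((2*(p:ℝ)+1)/2^(k+1)) with hM | hM | hM
      · -- A < x < M
        rw [haarAux_of_mem_left (j := k) (i := p+1) (by rw [eA]; exact hA) (by rw [eM]; exact hM)]
        rw [if_pos ⟨hA, lt_trans hM hMB⟩, if_pos ⟨hA, hM⟩]
        linear_combination hs
      · -- x = M
        have g1 : ¬((p:ℝ)/2^k < x ∧ x < (2*(p:ℝ)+1)/2^(k+1)) := by
          rintro ⟨-, h⟩; rw [hM] at h; exact lt_irrefl _ h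
        have g2 : ¬(x = (p:ℝ)/2^k) := by rw [hM]; exact ne_of_gt hAM
        rw [haarAux_mid (j := k) (i := p+1) (by rw [eM]; exact hM)]
        rw [if_pos ⟨hA, by rw [hM]; exact hMB⟩, if_neg g1, if_neg g2, if_pos hM, if_neg hodd]
        ring
      rcases lt_trichotomy x (((p:ℝ)+1)/2^k) with hB | hB | hB
      · -- M < x < B
        have g1 : ¬((p:ℝ)/2^k < x ∧ x < (2*(p:ℝ)+1)/2^(k+1)) := by rintro ⟨-, h⟩; linarith
        have g2 : ¬(x = (p:ℝ)/2^k) := ne_of_gt (lt_trans hAM hM)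
        have g3 : ¬(x = (2*(p:ℝ)+1)/2^(k+1)) := ne_of_gt hM
        rw [haarAux_of_mem_right (j := k) (i := p+1) (by rw [eM]; exact hM) (by rw [eB]; exact hB)]
        rw [if_pos ⟨lt_trans hAM hM, hB⟩, if_neg g1, if_neg g2, if_neg g3]
        linear_combination -hs
      · -- x = B
        have d1 : ¬((p:ℝ)/2^k < x ∧ x < ((p:ℝ)+1)/2^k) := by
          rintro ⟨-, h⟩; rw [hB] at h; exact lt_irrefl _ h
        have d2 : ¬(x = (p:ℝ)/2^k) := by rw [hB]; exact ne_of_gt hAB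
        have g1 : ¬((p:ℝ)/2^k < x ∧ x < (2*(p:ℝ)+1)/2^(k+1)) := by
          rintro ⟨-, h⟩; rw [hB] at h; linarith
        have g3 : ¬(x = (2*(p:ℝ)+1)/2^(k+1)) := by rw [hB]; exact ne_of_gt hMB
        rw [haarAux_right (j := k) (i := p+1) (by rw [eB]; exact hB)]
        rw [if_neg d1, if_neg d2, if_pos hB, if_neg g1, if_neg d2, if_neg g3, eB]
        simp only [hone]
        by_cases hB1 : p + 1 = 2^k
        · rw [if_pos hB1, if_pos hB1]
          linear_combination -hs
        · rw [if_neg hB1, if_neg hB1]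
          linear_combination -hs/2
      · -- B < x
        have d1 : ¬((p:ℝ)/2^k < x ∧ x < ((p:ℝ)+1)/2^k) := by rintro ⟨-, h⟩; linarith
        have d2 : ¬(x = (p:ℝ)/2^k) := ne_of_gt (lt_trans hAB hB)
        have d3 : ¬(x = ((p:ℝ)+1)/2^k) := ne_of_gt hB
        have g1 : ¬((p:ℝ)/2^k < x ∧ x < (2*(p:ℝ)+1)/2^(k+1)) := by rintro ⟨-, h⟩; linarith
        have g3 : ¬(x = (2*(p:ℝ)+1)/2^(k+1)) := ne_of_gt (lt_trans hMB hB)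
        rw [haarAux_of_gt_right (j := k) (i := p+1) (by rw [eB]; exact hB)]
        rw [if_neg d1, if_neg d2, if_neg d3, if_neg g1, if_neg d2, if_neg g3]
        ring
    · -- p' = 2p+1, t in right half
      subst hpar
      have ea' : ((↑(2*p+1):ℝ))/2^(k+1) = (2*(p:ℝ)+1)/2^(k+1) := by push_cast; ring
      have eb' : ((↑(2*p+1):ℝ)+1)/2^(k+1) = ((p:ℝ)+1)/2^k := by
        push_cast; rw [pow_succ]; field_simp; ring
      rw [ea'] at hp'1
      rw [eb'] at hp'2
      have hp1 : (p:ℝ)/2^k < t := lt_trans hAM hp'1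
      have hp2 : t < ((p:ℝ)+1)/2^k := hp'2
      have hterm : haarAux k (p+1) t = -(2:ℝ)^((k:ℝ)/2) := by
        apply haarAux_of_mem_right
        · rw [eM]; exact hp'1
        · rw [eB]; exact hp'2
      rw [kfun_succ k x t p hpk hp1 hp2, IH x t hx ht p hp1 hp2, ea', eb', hterm]
      rcases lt_trichotomy x ((p:ℝ)/2^k) with hA | hA | hA
      · -- x < A
        have d1 : ¬((p:ℝ)/2^k < x ∧ x < ((p:ℝ)+1)/2^k) := by rintro ⟨h, -⟩; linarith
        have d2 : ¬(x = (p:ℝ)/2^k) := ne_of_lt hA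
        have d3 : ¬(x = ((p:ℝ)+1)/2^k) := ne_of_lt (lt_trans hA hAB)
        have g1 : ¬((2*(p:ℝ)+1)/2^(k+1) < x ∧ x < ((p:ℝ)+1)/2^k) := by
          rintro ⟨h, -⟩; linarith
        have g2 : ¬(x = (2*(p:ℝ)+1)/2^(k+1)) := ne_of_lt (lt_trans hA hAM)
        rw [haarAux_of_lt_left (j := k) (i := p+1) (by rw [eA]; exact hA)]
        rw [if_neg d1, if_neg d2, if_neg d3, if_neg g1, if_neg g2, if_neg d3]
        ring
      · -- x = A
        have d1 : ¬((p:ℝ)/2^k < x ∧ x < ((p:ℝ)+1)/2^k) := by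
          rintro ⟨h, -⟩; rw [hA] at h; exact lt_irrefl _ h
        have g1 : ¬((2*(p:ℝ)+1)/2^(k+1) < x ∧ x < ((p:ℝ)+1)/2^k) := by
          rintro ⟨h, -⟩; rw [hA] at h; linarith
        have g2 : ¬(x = (2*(p:ℝ)+1)/2^(k+1)) := by rw [hA]; exact ne_of_lt hAM
        have g3 : ¬(x = ((p:ℝ)+1)/2^k) := by rw [hA]; exact ne_of_lt hAB
        rw [haarAux_left (j := k) (i := p+1) (by rw [eA]; exact hA)]
        rw [if_neg d1, if_pos hA, if_neg g1, if_neg g2, if_neg g3, eA]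
        simp only [hzero]
        by_cases hp0 : p = 0
        · rw [if_pos hp0, if_pos hp0]
          linear_combination -hs
        · rw [if_neg hp0, if_neg hp0]
          linear_combination -hs/2
      rcases lt_trichotomy x ((2*(p:ℝ)+1)/2^(k+1)) with hM | hM | hM
      · -- A < x < M
        have g1 : ¬((2*(p:ℝ)+1)/2^(k+1) < x ∧ x < ((p:ℝ)+1)/2^k) := by
          rintro ⟨h, -⟩; linarith
        have g2 : ¬(x = (2*(p:ℝ)+1)/2^(k+1)) := ne_of_lt hM
        have g3 : ¬(x = ((p:ℝ)+1)/2^k) := ne_of_lt (lt_trans hM hMB)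
        rw [haarAux_of_mem_left (j := k) (i := p+1) (by rw [eA]; exact hA) (by rw [eM]; exact hM)]
        rw [if_pos ⟨hA, lt_trans hM hMB⟩, if_neg g1, if_neg g2, if_neg g3]
        linear_combination -hs
      · -- x = M
        have g1 : ¬((2*(p:ℝ)+1)/2^(k+1) < x ∧ x < ((p:ℝ)+1)/2^k) := by
          rintro ⟨h, -⟩; rw [hM] at h; exact lt_irrefl _ h
        rw [haarAux_mid (j := k) (i := p+1) (by rw [eM]; exact hM)]
        rw [if_pos ⟨hA, by rw [hM]; exact hMB⟩, if_neg g1, if_pos hM,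
            if_neg (show ¬(2*p+1 = 0) by omega)]
        ring
      rcases lt_trichotomy x (((p:ℝ)+1)/2^k) with hB | hB | hB
      · -- M < x < B
        rw [haarAux_of_mem_right (j := k) (i := p+1) (by rw [eM]; exact hM) (by rw [eB]; exact hB)]
        rw [if_pos ⟨lt_trans hAM hM, hB⟩, if_pos ⟨hM, hB⟩]
        linear_combination hs
      · -- x = B
        have d1 : ¬((p:ℝ)/2^k < x ∧ x < ((p:ℝ)+1)/2^k) := by
          rintro ⟨-, h⟩; rw [hB] at h; exact lt_irrefl _ h
        have d2 : ¬(x = (p:ℝ)/2^k) := by rw [hB]; exact ne_of_gt hAB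
        have g1 : ¬((2*(p:ℝ)+1)/2^(k+1) < x ∧ x < ((p:ℝ)+1)/2^k) := by
          rintro ⟨-, h⟩; rw [hB] at h; exact lt_irrefl _ h
        have g2 : ¬(x = (2*(p:ℝ)+1)/2^(k+1)) := by rw [hB]; exact ne_of_gt hMB
        rw [haarAux_right (j := k) (i := p+1) (by rw [eB]; exact hB)]
        rw [if_neg d1, if_neg d2, if_pos hB, if_neg g1, if_neg g2, if_pos hB, eB]
        simp only [hone]
        by_cases hB1 : p + 1 = 2^k
        · rw [if_pos hB1, if_pos hB1, if_pos (show 2*p+1+1 = 2^(k+1) by omega)]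
          linear_combination hs
        · rw [if_neg hB1, if_neg hB1, if_neg (show ¬(2*p+1+1 = 2^(k+1)) by omega)]
          linear_combination hs/2
      · -- B < x
        have d1 : ¬((p:ℝ)/2^k < x ∧ x < ((p:ℝ)+1)/2^k) := by rintro ⟨-, h⟩; linarith
        have d2 : ¬(x = (p:ℝ)/2^k) := ne_of_gt (lt_trans hAB hB)
        have d3 : ¬(x = ((p:ℝ)+1)/2^k) := ne_of_gt hB
        have g1 : ¬((2*(p:ℝ)+1)/2^(k+1) < x ∧ x < ((p:ℝ)+1)/2^k) := by rintro ⟨-, h⟩; linarith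
        have g2 : ¬(x = (2*(p:ℝ)+1)/2^(k+1)) := ne_of_gt (lt_trans hMB hB)
        rw [haarAux_of_gt_right (j := k) (i := p+1) (by rw [eB]; exact hB)]
        rw [if_neg d1, if_neg d2, if_neg d3, if_neg g1, if_neg g2, if_neg d3]
        ring

end HW

namespace HW

lemma exists_floor (k : ℕ) (t : ℝ) (ht : t ∈ Set.Ioo (0:ℝ) 1)
    (hnd : ∀ m : ℤ, t * 2^k ≠ (m:ℝ)) :
    ∃ p : ℕ, p < 2^k ∧ (p:ℝ)/2^k < t ∧ t < ((p:ℝ)+1)/2^k := by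
  have h2k : (0:ℝ) < 2^k := by positivity
  set p := ⌊t * 2^k⌋₊ with hp
  have h0 : 0 ≤ t * 2^k := by nlinarith [ht.1]
  have hle : (p:ℝ) ≤ t*2^k := Nat.floor_le h0
  have hlt : t*2^k < p+1 := Nat.lt_floor_add_one _
  have hne : (p:ℝ) ≠ t*2^k := by
    intro h
    exact hnd p (by push_cast; linarith)
  refine ⟨p, ?_, ?_, ?_⟩
  · have h1 : t*2^k < 2^k := by nlinarith [ht.2]
    have h2 : (p:ℝ) < 2^k := lt_of_le_of_lt hle h1
    have h3 : (p:ℝ) < ((2^k : ℕ) : ℝ) := by push_cast; linarith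
    exact_mod_cast h3
  · rw [div_lt_iff₀ h2k]; exact lt_of_le_of_ne hle hne
  · rw [lt_div_iff₀ h2k]; linarith

lemma mem_Ioo_of_nd {k : ℕ} {t : ℝ} (ht : t ∈ Set.Icc (0:ℝ) 1)
    (hnd : ∀ m : ℤ, t * 2^k ≠ (m:ℝ)) : t ∈ Set.Ioo (0:ℝ) 1 := by
  constructor
  · rcases lt_or_eq_of_le ht.1 with h | h
    · exact h
    · exact absurd (by rw [← h]; simp : t * 2^k = ((0:ℤ):ℝ)) (hnd 0)
  · rcases lt_or_eq_of_le ht.2 with h | h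
    · exact h
    · refine absurd ?_ (hnd (2^k))
      rw [h, one_mul]; push_cast; ring

lemma kfun_nonneg {k : ℕ} {x t : ℝ} (hx : x ∈ Set.Icc (0:ℝ) 1) (ht : t ∈ Set.Icc (0:ℝ) 1)
    (hnd : ∀ m : ℤ, t * 2^k ≠ (m:ℝ)) : 0 ≤ kfun k x t := by
  have ht' := mem_Ioo_of_nd ht hnd
  obtain ⟨p, hpk, hp1, hp2⟩ := exists_floor k t ht' hnd
  rw [kfun_char k x t hx ht' p hp1 hp2]
  split_ifs <;> positivity

lemma kfun_support {k : ℕ} {x t : ℝ} (hx : x ∈ Set.Icc (0:ℝ) 1) (ht : t ∈ Set.Icc (0:ℝ) 1)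
    (hnd : ∀ m : ℤ, t * 2^k ≠ (m:ℝ)) (h : kfun k x t ≠ 0) : |t - x| ≤ 2⁻¹^k := by
  have ht' := mem_Ioo_of_nd ht hnd
  obtain ⟨p, hpk, hp1, hp2⟩ := exists_floor k t ht' hnd
  rw [kfun_char k x t hx ht' p hp1 hp2] at h
  have h2k : (0:ℝ) < 2^k := by positivity
  have he : ((p:ℝ)+1)/2^k - (p:ℝ)/2^k = 2⁻¹^k := by
    rw [inv_pow, div_sub_div_same]; ring_nf
  rw [abs_le]
  split_ifs at h with h1 h2 h3 h4 h5
  · constructor <;> linarith [h1.1, h1.2]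
  · constructor <;> linarith
  · constructor <;> linarith
  · constructor <;> linarith
  · constructor <;> linarith
  · exact absurd rfl h

lemma measurable_kfun (k : ℕ) (x : ℝ) : Measurable (kfun k x) := by
  unfold kfun
  apply Finset.measurable_sum
  intro n _
  exact (measurable_haarFn n).const_mul _

lemma kfun_bound (k : ℕ) (x : ℝ) : ∃ C, ∀ t, |kfun k x t| ≤ C := by
  refine ⟨∑ n ∈ Finset.Icc 1 (2^k), |haarFn n x| * Classical.choose (haarFn_abs_le n),
    fun t => ?_⟩
  apply (Finset.abs_sum_le_sum_abs _ _).trans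
  apply Finset.sum_le_sum
  intro n _
  rw [abs_mul]
  exact mul_le_mul_of_nonneg_left (Classical.choose_spec (haarFn_abs_le n) t) (abs_nonneg _)

noncomputable instance : IsFiniteMeasure (volume.restrict (Set.Icc (0:ℝ) 1)) :=
  ⟨by rw [Measure.restrict_apply_univ, Real.volume_Icc]; exact ENNReal.ofReal_lt_top⟩

lemma integrable_on_Icc_of_bounded {g : ℝ → ℝ} (hm : Measurable g) (C : ℝ)
    (hb : ∀ t, |g t| ≤ C) : Integrable g (volume.restrict (Set.Icc (0:ℝ) 1)) := by
  exact (integrable_const C).mono' hm.aestronglyMeasurable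
    (ae_of_all _ (by simpa [Real.norm_eq_abs] using hb))

lemma integral_kfun (k : ℕ) (x : ℝ) : ∫ t in Set.Icc (0:ℝ) 1, kfun k x t = 1 := by
  have hint : ∀ n, Integrable (fun t => haarFn n x * haarFn n t)
      (volume.restrict (Set.Icc (0:ℝ) 1)) := by
    intro n
    obtain ⟨C, hC⟩ := haarFn_abs_le n
    apply integrable_on_Icc_of_bounded ((measurable_haarFn n).const_mul _) (|haarFn n x| * C)
    intro t
    rw [abs_mul]
    exact mul_le_mul_of_nonneg_left (hC t) (abs_nonneg _)
  unfold kfun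
  rw [integral_finset_sum _ (fun n _ => hint n)]
  rw [Finset.sum_eq_single_of_mem 1 (Finset.mem_Icc.2 ⟨le_refl 1, Nat.one_le_two_pow⟩)]
  · simp only [haarFn, le_refl, if_pos, one_mul]
    rw [setIntegral_const]
    rw [Real.volume_real_Icc_of_le zero_le_one]
    norm_num
  · intro n hn hne
    have h2 : 2 ≤ n := by
      rw [Finset.mem_Icc] at hn
      omega
    rw [integral_const_mul, integral_haarFn h2, mul_zero]

end HW

namespace HW

lemma cube_mem_iff {d : ℕ} (y : Fin d → ℝ) : y ∈ unitCube d ↔ ∀ s, y s ∈ Set.Icc (0:ℝ) 1 := by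
  constructor
  · intro hy s
    exact ⟨hy.1 s, hy.2 s⟩
  · intro h
    exact ⟨fun s => (h s).1, fun s => (h s).2⟩

lemma measurableSet_unitCube (d : ℕ) : MeasurableSet (unitCube d) := by
  rw [unitCube, ← Set.pi_univ_Icc]
  exact MeasurableSet.pi Set.countable_univ (fun s _ => measurableSet_Icc)

lemma volume_unitCube (d : ℕ) : volume (unitCube d) = 1 := by
  rw [unitCube, Real.volume_Icc_pi]
  simp

instance (d : ℕ) : IsFiniteMeasure (volume.restrict (unitCube d)) :=
  ⟨by rw [Measure.restrict_apply_univ, volume_unitCube]; exact ENNReal.one_lt_top⟩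

lemma modC_bddAbove {d : ℕ} (f : (Fin d → ℝ) → ℝ) (C : ℝ) (hC : ∀ x ∈ unitCube d, |f x| ≤ C)
    (r : ℝ) :
    BddAbove {v : ℝ | ∃ x h : Fin d → ℝ, (∀ s, x s ∈ Set.Icc (0:ℝ) 1) ∧
      (∀ s, x s + h s ∈ Set.Icc (0:ℝ) 1) ∧ Real.sqrt (∑ s, (h s) ^ 2) ≤ r ∧
      v = |f (fun s => x s + h s) - f x|} := by
  refine ⟨C + C, ?_⟩
  rintro v ⟨y, h, hy, hyh, -, rfl⟩
  have h1 : |f (fun s => y s + h s)| ≤ C := hC _ ((cube_mem_iff _).2 hyh)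
  have h2 : |f y| ≤ C := hC _ ((cube_mem_iff _).2 hy)
  calc |f (fun s => y s + h s) - f y| ≤ |f (fun s => y s + h s)| + |f y| := abs_sub _ _
    _ ≤ C + C := add_le_add h1 h2

lemma modC_nonneg {d : ℕ} (f : (Fin d → ℝ) → ℝ) (C : ℝ) (hC : ∀ x ∈ unitCube d, |f x| ≤ C)
    (x : Fin d → ℝ) (hx : x ∈ unitCube d) (r : ℝ) (hr : 0 ≤ r) : 0 ≤ modC d f r := by
  apply le_csSup (modC_bddAbove f C hC r)
  refine ⟨x, 0, (cube_mem_iff x).1 hx, fun s => by simpa using (cube_mem_iff x).1 hx s,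
    by simpa using hr, by simp⟩

lemma modC_ge {d : ℕ} (f : (Fin d → ℝ) → ℝ) (C : ℝ) (hC : ∀ x ∈ unitCube d, |f x| ≤ C)
    (x t : Fin d → ℝ) (hx : x ∈ unitCube d) (ht : t ∈ unitCube d) (r : ℝ)
    (hsq : Real.sqrt (∑ s, (t s - x s)^2) ≤ r) : |f t - f x| ≤ modC d f r := by
  apply le_csSup (modC_bddAbove f C hC r)
  refine ⟨x, fun s => t s - x s, (cube_mem_iff x).1 hx, fun s => ?_, hsq, ?_⟩
  · rw [show x s + (t s - x s) = t s from by ring]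
    exact (cube_mem_iff t).1 ht s
  · rw [show (fun s => x s + (t s - x s)) = t from funext fun s => by ring]

end HW

/-- if `f : [0,1]^d → ℝ` is bounded and Borel measurable, then for every
`k ≥ 0` and `x ∈ [0,1]^d`,
`|S^{(d)}_{2^k}(f,x) − f(x)| ≤ ∑_{l=0}^{d-1} ω(f, (2l+1)·2^{-k})`. -/
theorem statement5 (d : ℕ) (f : (Fin d → ℝ) → ℝ)
    (hbdd : ∃ C : ℝ, ∀ x ∈ unitCube d, |f x| ≤ C)
    (hmeas : Measurable ((unitCube d).restrict f))
    (k : ℕ) (x : Fin d → ℝ) (hx : x ∈ unitCube d) :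
    |haarSumD d k f x - f x| ≤
      ∑ l ∈ Finset.range d, modC d f ((2 * (l : ℝ) + 1) * 2⁻¹ ^ k) := by
  classical
  obtain ⟨C, hC⟩ := hbdd
  have hcube := HW.measurableSet_unitCube d
  -- measurability and integrability of f on the cube
  have hFmeas : AEStronglyMeasurable f (volume.restrict (unitCube d)) := by
    have hemb := MeasurableEmbedding.subtype_coe hcube
    have hind : Measurable ((unitCube d).indicator f) := by
      have heq : (unitCube d).indicator f =
          Function.extend (Subtype.val : unitCube d → (Fin d → ℝ))
            ((unitCube d).restrict f) (fun _ => 0) := by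
        funext y
        by_cases hy : y ∈ unitCube d
        · rw [Set.indicator_of_mem hy,
            show y = ((⟨y, hy⟩ : unitCube d) : Fin d → ℝ) from rfl,
            hemb.injective.extend_apply]
          rfl
        · rw [Set.indicator_of_notMem hy, Function.extend_apply']
          rintro ⟨a, rfl⟩
          exact hy a.2
      rw [heq]
      exact hemb.measurable_extend hmeas measurable_const
    have hae_eq : f =ᵐ[volume.restrict (unitCube d)] (unitCube d).indicator f := by
      filter_upwards [self_mem_ae_restrict hcube] with t ht
      rw [Set.indicator_of_mem ht]
    exact hind.aestronglyMeasurable.congr hae_eq.symm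
  have hIntf : Integrable f (volume.restrict (unitCube d)) := by
    apply (integrable_const C).mono' hFmeas
    filter_upwards [self_mem_ae_restrict hcube] with t ht
    rw [Real.norm_eq_abs]
    exact hC t ht
  -- the product kernel W
  set W : (Fin d → ℝ) → ℝ := fun t => ∏ s, kfun k (x s) (t s) with hWdef
  have hWmeas : Measurable W := by
    apply Finset.measurable_prod
    intro s _
    exact (HW.measurable_kfun k (x s)).comp (measurable_pi_apply s)
  obtain ⟨BW, hBW⟩ : ∃ B, ∀ t, |W t| ≤ B := by
    refine ⟨∏ s, Classical.choose (HW.kfun_bound k (x s)), fun t => ?_⟩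
    rw [hWdef, Finset.abs_prod]
    apply Finset.prod_le_prod (fun s _ => abs_nonneg _)
    intro s _
    exact Classical.choose_spec (HW.kfun_bound k (x s)) (t s)
  have hIntW : Integrable W (volume.restrict (unitCube d)) :=
    (integrable_const BW).mono' hWmeas.aestronglyMeasurable
      (ae_of_all _ fun t => by rw [Real.norm_eq_abs]; exact hBW t)
  -- Step 1 : haarSumD is integration against W
  have step1 : haarSumD d k f x = ∫ t in unitCube d, f t * W t := by
    unfold haarSumD haarCoeffD
    have hterm : ∀ n ∈ Fintype.piFinset (fun _ : Fin d => Finset.Icc 1 (2^k)),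
        (∫ t in unitCube d, f t * ∏ s, haarFn (n s) (t s)) * ∏ s, haarFn (n s) (x s)
        = ∫ t in unitCube d, f t * ∏ s, (haarFn (n s) (x s) * haarFn (n s) (t s)) := by
      intro n _
      rw [← integral_mul_const]
      congr 1
      funext t
      rw [Finset.prod_mul_distrib]
      ring
    rw [Finset.sum_congr rfl hterm, ← integral_finset_sum]
    · congr 1
      funext t
      rw [← Finset.mul_sum]
      congr 1
      rw [← Finset.prod_univ_sum (fun _ : Fin d => Finset.Icc 1 (2^k))
        (fun s m => haarFn m (x s) * haarFn m (t s))]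
      rfl
    · intro n _
      have hPm : Measurable (fun t : Fin d → ℝ =>
          ∏ s, haarFn (n s) (x s) * haarFn (n s) (t s)) := by
        apply Finset.measurable_prod
        intro s _
        exact ((HW.measurable_haarFn (n s)).comp (measurable_pi_apply s)).const_mul _
      have hPb : ∃ B, ∀ t : Fin d → ℝ,
          ‖∏ s, haarFn (n s) (x s) * haarFn (n s) (t s)‖ ≤ B := by
        refine ⟨∏ s, |haarFn (n s) (x s)| * Classical.choose (HW.haarFn_abs_le (n s)),
          fun t => ?_⟩
        rw [Real.norm_eq_abs, Finset.abs_prod]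
        apply Finset.prod_le_prod (fun s _ => abs_nonneg _)
        intro s _
        rw [abs_mul]
        exact mul_le_mul_of_nonneg_left
          (Classical.choose_spec (HW.haarFn_abs_le (n s)) (t s)) (abs_nonneg _)
      exact (hIntf.bdd_mul hPm.aestronglyMeasurable (ae_of_all _ hPb.choose_spec)).congr
        (ae_of_all _ fun t => mul_comm _ _)
  -- Step 2 : the kernel integrates to 1
  have hW1 : ∫ t in unitCube d, W t = 1 := by
    have hind : ∀ t, (unitCube d).indicator W t
        = ∏ s, (Set.Icc (0:ℝ) 1).indicator (kfun k (x s)) (t s) := by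
      intro t
      by_cases ht : t ∈ unitCube d
      · rw [Set.indicator_of_mem ht]
        exact Finset.prod_congr rfl
          (fun s _ => (Set.indicator_of_mem ((HW.cube_mem_iff t).1 ht s) _).symm)
      · rw [Set.indicator_of_notMem ht]
        have hex : ∃ s, t s ∉ Set.Icc (0:ℝ) 1 := by
          by_contra hcon
          push_neg at hcon
          exact ht ((HW.cube_mem_iff t).2 hcon)
        obtain ⟨s, hs⟩ := hex
        exact (Finset.prod_eq_zero (Finset.mem_univ s) (Set.indicator_of_notMem hs _)).symm
    have heach : ∀ s : Fin d, ∫ τ : ℝ, (Set.Icc (0:ℝ) 1).indicator (kfun k (x s)) τ = 1 := by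
      intro s
      rw [integral_indicator measurableSet_Icc, HW.integral_kfun]
    calc ∫ t in unitCube d, W t
        = ∫ t : Fin d → ℝ, (unitCube d).indicator W t := (integral_indicator hcube).symm
      _ = ∫ t : Fin d → ℝ, ∏ s, (Set.Icc (0:ℝ) 1).indicator (kfun k (x s)) (t s) := by
          rw [funext hind]
      _ = ∏ s, ∫ τ : ℝ, (Set.Icc (0:ℝ) 1).indicator (kfun k (x s)) τ :=
          integral_fintype_prod_eq_prod _
      _ = 1 := by simp [heach]
  have hIntfW : Integrable (fun t => f t * W t) (volume.restrict (unitCube d)) :=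
    (hIntf.bdd_mul hWmeas.aestronglyMeasurable
      (ae_of_all _ fun t => by rw [Real.norm_eq_abs]; exact hBW t)).congr
      (ae_of_all _ fun t => mul_comm _ _)
  have step2 : haarSumD d k f x - f x = ∫ t in unitCube d, (f t - f x) * W t := by
    rw [step1, show (fun t => (f t - f x) * W t) = fun t => f t * W t - f x * W t from
      funext fun t => by ring, integral_sub hIntfW (hIntW.const_mul (f x)),
      integral_const_mul, hW1, mul_one]
  rcases Nat.eq_zero_or_pos d with hd | hd1
  · -- dimension 0
    subst hd
    haveI : Subsingleton (Fin 0 → ℝ) := ⟨fun a b => funext (fun s => s.elim0)⟩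
    rw [show |haarSumD 0 k f x - f x| ≤
        ∑ l ∈ Finset.range 0, modC 0 f ((2 * (l : ℝ) + 1) * 2⁻¹ ^ k) ↔
        |haarSumD 0 k f x - f x| ≤ 0 from by simp]
    rw [step2, show (fun t => (f t - f x) * W t) = fun _ => (0:ℝ) from
      funext fun t => by rw [Subsingleton.elim t x]; ring, integral_zero]
    simp
  · -- dimension ≥ 1
    set R : ℝ := (2 * ((d - 1 : ℕ) : ℝ) + 1) * 2⁻¹ ^ k with hR
    have hR0 : 0 ≤ R := by rw [hR]; positivity
    -- a.e. nondyadic coordinates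
    have hDk : ∀ᵐ t ∂(volume.restrict (unitCube d)),
        ∀ s : Fin d, ∀ m : ℤ, t s * 2^k ≠ (m:ℝ) := by
      apply ae_restrict_of_ae
      rw [ae_all_iff]
      intro s
      rw [ae_all_iff]
      intro m
      rw [ae_iff]
      have h0 : volume {t : Fin d → ℝ | t s = (m:ℝ)/2^k} = 0 := by
        rw [volume_pi]
        exact Measure.pi_hyperplane _ s _
      apply measure_mono_null _ h0
      intro t ht
      simp only [Set.mem_setOf_eq, not_not] at ht ⊢
      rw [eq_div_iff (by positivity : ((2:ℝ)^k) ≠ 0)]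
      exact ht
    have haeW : ∀ᵐ t ∂(volume.restrict (unitCube d)),
        ‖(f t - f x) * W t‖ ≤ modC d f R * W t := by
      filter_upwards [hDk, self_mem_ae_restrict hcube] with t hnd htc
      have htcs : ∀ s, t s ∈ Set.Icc (0:ℝ) 1 := (HW.cube_mem_iff t).1 htc
      have hxcs : ∀ s, x s ∈ Set.Icc (0:ℝ) 1 := (HW.cube_mem_iff x).1 hx
      have h0 : 0 ≤ W t :=
        Finset.prod_nonneg (fun s _ => HW.kfun_nonneg (hxcs s) (htcs s) (hnd s))
      rw [Real.norm_eq_abs, abs_mul, abs_of_nonneg h0]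
      by_cases hW0 : W t = 0
      · rw [hW0]; simp
      · apply mul_le_mul_of_nonneg_right _ h0
        have hcoord : ∀ s, |t s - x s| ≤ 2⁻¹^k := by
          intro s
          refine HW.kfun_support (hxcs s) (htcs s) (hnd s) (fun hz => hW0 ?_)
          exact Finset.prod_eq_zero (Finset.mem_univ s) hz
        apply HW.modC_ge f C hC x t hx htc R
        have hd1' : (1:ℝ) ≤ (d:ℝ) := by exact_mod_cast hd1
        have hcast : ((d - 1 : ℕ):ℝ) = (d:ℝ) - 1 := by
          rw [Nat.cast_sub hd1, Nat.cast_one]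
        have h1 : ∑ s, (t s - x s)^2 ≤ (d:ℝ) * (2⁻¹^k)^2 := by
          calc ∑ s, (t s - x s)^2 ≤ ∑ _s : Fin d, ((2:ℝ)⁻¹^k)^2 := by
                apply Finset.sum_le_sum
                intro s _
                rw [← sq_abs]
                exact pow_le_pow_left₀ (abs_nonneg _) (hcoord s) 2
            _ = (d:ℝ) * (2⁻¹^k)^2 := by
                rw [Finset.sum_const, Finset.card_univ, Fintype.card_fin, nsmul_eq_mul]
        have hsqnn : (0:ℝ) ≤ ((2:ℝ)⁻¹^k)^2 := by positivity
        have hkey : ((2*((d:ℝ)-1)+1)^2 - (d:ℝ)) * ((2:ℝ)⁻¹^k)^2 ≥ 0 := by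
          apply mul_nonneg _ hsqnn
          nlinarith [sq_nonneg ((d:ℝ) - 1), hd1']
        have h2 : (d:ℝ) * (2⁻¹^k)^2 ≤ R^2 := by
          rw [hR, hcast]
          nlinarith [hkey]
        calc Real.sqrt (∑ s, (t s - x s)^2) ≤ Real.sqrt (R^2) :=
            Real.sqrt_le_sqrt (h1.trans h2)
          _ = R := Real.sqrt_sq hR0
    have hb1 : |∫ t in unitCube d, (f t - f x) * W t| ≤ modC d f R := by
      have hnb := norm_integral_le_of_norm_le (hIntW.const_mul (modC d f R)) haeW
      rw [Real.norm_eq_abs] at hnb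
      apply hnb.trans
      rw [integral_const_mul, hW1, mul_one]
    rw [step2]
    apply hb1.trans
    rw [hR]
    apply Finset.single_le_sum
      (f := fun l : ℕ => modC d f ((2 * (l : ℝ) + 1) * 2⁻¹ ^ k)) (a := d - 1)
      ?_ (Finset.mem_range.2 (by omega : d - 1 < d))
    intro l _
    apply HW.modC_nonneg f C hC x hx ((2 * (l : ℝ) + 1) * 2⁻¹ ^ k)
    have hl : (0:ℝ) ≤ (l:ℝ) := Nat.cast_nonneg l
    have h2 : (0:ℝ) < 2⁻¹ ^ k := by positivity
    nlinarith
end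

section
/- For every integer k ≥ 1, every d ≥ 1, and every y = (y_1,…,y_d) ∈ [0,1]^d: Σ_{(j_1,…,j_d) ∈ {1,…,k}^d} 2^{−(j_1+⋯+j_d)} · #{(i_1,…,i_d) : 1 ≤ i_s ≤ 2^{j_s} for all s, and y_s ∈ Δ_{j_s}^{i_s} for at least one s} ≤ k^d − (k − 1 + 2^{−k})^d. -/
open MeasureTheory

/- Auxiliary lemmas for statement16 -/
lemma dyadic_card_le_one (z : ℝ) (j : ℕ) :
    (((Finset.Icc 1 (2 ^ j)).filter
      (fun i : ℕ => z ∈ Set.Ioo (((i : ℝ) - 1) / 2 ^ j) ((i : ℝ) / 2 ^ j))).card) ≤ 1 := by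
  rw [Finset.card_le_one]
  intro a ha b hb
  simp only [Finset.mem_filter, Set.mem_Ioo] at ha hb
  by_contra hne
  rcases Nat.lt_or_ge a b with h | h
  · have h1 : (a : ℝ) / 2 ^ j ≤ ((b : ℝ) - 1) / 2 ^ j := by
      apply div_le_div_of_nonneg_right _ (by positivity)
      have : (a : ℝ) + 1 ≤ b := by exact_mod_cast h
      linarith
    linarith [ha.2.2, hb.2.1]
  · rcases Nat.lt_or_ge b a with h' | h'
    · have h1 : (b : ℝ) / 2 ^ j ≤ ((a : ℝ) - 1) / 2 ^ j := by
        apply div_le_div_of_nonneg_right _ (by positivity)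
        have : (b : ℝ) + 1 ≤ a := by exact_mod_cast h'
        linarith
      linarith [hb.2.2, ha.2.1]
    · exact hne (by omega)

lemma geom_half (k : ℕ) : ∑ j ∈ Finset.Icc 1 k, (2⁻¹ : ℝ) ^ j = 1 - 2⁻¹ ^ k := by
  induction k with
  | zero => simp
  | succ n ih =>
    rw [Finset.sum_Icc_succ_top (by omega), ih]
    ring

/-- for every `k ≥ 1`, `d ≥ 1` and `y ∈ [0,1]^d`,
`∑_{(j_1,…,j_d)∈{1,…,k}^d} 2^{-(j_1+⋯+j_d)} · #{(i_1,…,i_d) : 1 ≤ i_s ≤ 2^{j_s},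
∃ s, y_s ∈ Δ_{j_s}^{i_s}} ≤ k^d − (k − 1 + 2^{-k})^d`. -/
theorem statement16 (k : ℕ) (hk : 1 ≤ k) (d : ℕ) (hd : 1 ≤ d)
    (y : Fin d → ℝ) (hy : ∀ s, y s ∈ Set.Icc (0:ℝ) 1) :
    ∑ j ∈ Fintype.piFinset (fun _ : Fin d => Finset.Icc 1 k),
      (2 : ℝ) ^ (-(∑ s, (j s : ℝ))) *
        ((Fintype.piFinset (fun s : Fin d => Finset.Icc 1 (2 ^ j s))).filter
          (fun i : Fin d → ℕ => ∃ s, y s ∈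
            Set.Ioo (((i s : ℝ) - 1) / 2 ^ j s) ((i s : ℝ) / 2 ^ j s))).card ≤
      (k : ℝ) ^ d - ((k : ℝ) - 1 + 2⁻¹ ^ k) ^ d := by
  classical
  set c : Fin d → ℕ → ℕ := fun s j =>
    ((Finset.Icc 1 (2 ^ j)).filter
      (fun i : ℕ => y s ∈ Set.Ioo (((i : ℝ) - 1) / 2 ^ j) ((i : ℝ) / 2 ^ j))).card with hc
  have hc1 : ∀ s j, c s j ≤ 1 := fun s j => dyadic_card_le_one (y s) j
  have hcle : ∀ s j, c s j ≤ 2 ^ j := fun s j =>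
    le_trans (Finset.card_filter_le _ _) (by simp)
  have key : ∀ j ∈ Fintype.piFinset (fun _ : Fin d => Finset.Icc 1 k),
      (2 : ℝ) ^ (-(∑ s, (j s : ℝ))) *
        ((Fintype.piFinset (fun s : Fin d => Finset.Icc 1 (2 ^ j s))).filter
          (fun i : Fin d → ℕ => ∃ s, y s ∈
            Set.Ioo (((i s : ℝ) - 1) / 2 ^ j s) ((i s : ℝ) / 2 ^ j s))).card
      = 1 - ∏ s, (1 - (c s (j s) : ℝ) / 2 ^ (j s)) := by
    intro j _
    set P : Fin d → ℕ → Prop := fun s i =>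
      y s ∈ Set.Ioo (((i : ℝ) - 1) / 2 ^ j s) ((i : ℝ) / 2 ^ j s) with hP
    set T := Fintype.piFinset (fun s : Fin d => Finset.Icc 1 (2 ^ j s)) with hT
    have hB : T.filter (fun i => ¬ ∃ s, P s (i s))
        = Fintype.piFinset (fun s => (Finset.Icc 1 (2 ^ j s)).filter (fun i => ¬ P s i)) := by
      ext f
      simp only [Finset.mem_filter, Fintype.mem_piFinset, hT, not_exists, forall_and]
    have hBcard : (T.filter (fun i => ¬ ∃ s, P s (i s))).card
        = ∏ s, (2 ^ j s - c s (j s)) := by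
      rw [hB, Fintype.card_piFinset]
      refine Finset.prod_congr rfl fun s _ => ?_
      have := Finset.card_filter_add_card_filter_not
        (s := Finset.Icc 1 (2 ^ j s)) (p := fun i => P s i)
      simp only [Nat.card_Icc] at this
      have hPc : (Finset.filter (fun i => P s i) (Finset.Icc 1 (2 ^ j s))).card
          = c s (j s) := rfl
      omega
    have hcard : (T.filter (fun i => ∃ s, P s (i s))).card
        + (T.filter (fun i => ¬ ∃ s, P s (i s))).card = ∏ s, 2 ^ j s := by
      rw [Finset.card_filter_add_card_filter_not, hT, Fintype.card_piFinset]
      simp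
    have hA : ((T.filter (fun i => ∃ s, P s (i s))).card : ℝ)
        = ∏ s, (2:ℝ) ^ j s - ∏ s, ((2:ℝ) ^ j s - c s (j s)) := by
      have hBr : ((T.filter (fun i => ¬ ∃ s, P s (i s))).card : ℝ)
          = ∏ s, ((2:ℝ) ^ j s - c s (j s)) := by
        rw [hBcard, Nat.cast_prod]
        refine Finset.prod_congr rfl fun s _ => ?_
        rw [Nat.cast_sub (hcle s (j s))]
        push_cast; ring
      have := congrArg (fun n : ℕ => (n : ℝ)) hcard
      push_cast at this
      rw [hBr] at this
      linarith
    have h2 : (2:ℝ) ^ (-(∑ s, ((j s) : ℝ))) = ∏ s, ((2:ℝ) ^ (j s))⁻¹ := by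
      rw [Finset.prod_inv_distrib, Real.rpow_neg (by norm_num : (0:ℝ) ≤ 2)]
      congr 1
      rw [show (∑ s, ((j s):ℝ)) = ((∑ s, j s : ℕ) : ℝ) by push_cast; rfl,
        Real.rpow_natCast, ← Finset.prod_pow_eq_pow_sum]
    rw [hA, h2, mul_sub, ← Finset.prod_mul_distrib, ← Finset.prod_mul_distrib]
    congr 1
    · conv_rhs => rw [← Finset.prod_const_one (s := (Finset.univ : Finset (Fin d)))]
      refine Finset.prod_congr rfl fun s _ => ?_
      field_simp
    · refine Finset.prod_congr rfl fun s _ => ?_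
      have hne : ((2:ℝ) ^ (j s)) ≠ 0 := by positivity
      field_simp
  have hswap := Finset.prod_univ_sum (t := fun _ : Fin d => Finset.Icc 1 k)
    (f := fun (s : Fin d) (j : ℕ) => 1 - (c s j : ℝ) / 2 ^ j)
  rw [Finset.sum_congr rfl key, Finset.sum_sub_distrib, Finset.sum_const, ← hswap]
  have hcard : (Fintype.piFinset (fun _ : Fin d => Finset.Icc 1 k)).card = k ^ d := by
    rw [Fintype.card_piFinset]; simp
  rw [hcard, nsmul_eq_mul, mul_one]
  push_cast
  have hlow : (0:ℝ) ≤ (k : ℝ) - 1 + 2⁻¹ ^ k := by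
    have h1 : (1:ℝ) ≤ (k:ℝ) := by exact_mod_cast hk
    have h2 : (0:ℝ) < 2⁻¹ ^ k := by positivity
    linarith
  have hconst : ((k:ℝ) - 1 + 2⁻¹ ^ k) ^ d = ∏ _s : Fin d, ((k:ℝ) - 1 + 2⁻¹ ^ k) := by
    simp [Finset.prod_const]
  have hbound : ((k:ℝ) - 1 + 2⁻¹ ^ k) ^ d
      ≤ ∏ s : Fin d, ∑ j ∈ Finset.Icc 1 k, (1 - (c s j : ℝ) / 2 ^ j) := by
    rw [hconst]
    apply Finset.prod_le_prod (fun s _ => hlow)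
    intro s _
    calc (k:ℝ) - 1 + 2⁻¹ ^ k = ∑ j ∈ Finset.Icc 1 k, (1 - (2⁻¹:ℝ) ^ j) := by
          rw [Finset.sum_sub_distrib, Finset.sum_const, Nat.card_Icc, geom_half]
          simp only [nsmul_eq_mul, mul_one]
          have : (k:ℝ) - 1 + 1 = ((k + 1 - 1 : ℕ) : ℝ) := by
            push_cast [Nat.add_sub_cancel]; ring
          push_cast [Nat.add_sub_cancel]
          ring
      _ ≤ ∑ j ∈ Finset.Icc 1 k, (1 - (c s j : ℝ) / 2 ^ j) := by
          apply Finset.sum_le_sum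
          intro i _
          have h1 : (c s i : ℝ) ≤ 1 := by exact_mod_cast hc1 s i
          have h2 : (c s i : ℝ) / 2 ^ i ≤ 1 / 2 ^ i :=
            by gcongr
          have h3 : (1:ℝ) / 2 ^ i = 2⁻¹ ^ i := by
            rw [one_div, inv_pow]
          linarith
  linarith
end
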